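/- arXiv:2308.13284 — 5 statements merged into one kernel-verified Lean document; each statement's English description precedes it below -/
import Mathlib

section
/- The planar system ẋ = x(1-y+cx), ẏ = y(-1+x) with c > 0 admits no formal power series first integral: if f ∈ ℂ[[x,y]] satisfies x(1-y+cx)∂f/∂x + y(-1+x)∂f/∂y = 0, then f is a constant. -/
/-!
Writing `a m n` for the coefficient of `x^m y^n` in `f`, the coefficient of `x^M y^N` in the
equation reads `(M - N) a M N - M a M (N-1) + (c(M-1) + N) a (M-1) N = 0`. Off the diagonal this
determines `a M N` from coefficients of lower degree, so by induction on the degree they all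
vanish. On the diagonal the leading factor `M - N` vanishes; instead, once the off-diagonal
coefficients of degree `2k` vanish, the equations at `(k+1, k)` and `(k, k+1)` express the two
neighbours of degree `2k+1` as `-(c+1) k a k k` and `-k a k k`, and substituting these into the
equation at `(k+1, k+1)` leaves `c k a k k = 0`, so `a k k = 0` because `c ≠ 0`.
-/

open MvPowerSeries

/-- Formal partial derivative of a multivariate formal power series. -/
noncomputable def formalPderiv (i : Fin 2) (f : MvPowerSeries (Fin 2) ℂ) :
    MvPowerSeries (Fin 2) ℂ :=
  fun n => ((n i : ℂ) + 1) * f (n + Finsupp.single i 1)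

namespace MvPowerSeries

variable {σ R : Type*} [CommSemiring R]

theorem coeff_single_add_X_mul (s : σ) (n : σ →₀ ℕ) (φ : MvPowerSeries σ R) :
    coeff (Finsupp.single s 1 + n) (X s * φ) = coeff n φ := by
  rw [X_def, coeff_add_monomial_mul, one_mul]

theorem coeff_X_mul_of_apply_eq_zero {s : σ} {n : σ →₀ ℕ} (hn : n s = 0)
    (φ : MvPowerSeries σ R) : coeff n (X s * φ) = 0 := by
  classical
  rw [X_def, coeff_monomial_mul, if_neg]
  simp [Finsupp.single_le_iff, hn]

end MvPowerSeries

theorem coeff_X_mul_formalPderiv (i : Fin 2) (f : MvPowerSeries (Fin 2) ℂ) (e : Fin 2 →₀ ℕ) :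
    coeff e (X i * formalPderiv i f) = e i * coeff e f := by
  by_cases he : e i = 0
  · rw [coeff_X_mul_of_apply_eq_zero he, he, Nat.cast_zero, zero_mul]
  obtain ⟨e, rfl⟩ : ∃ e', e = Finsupp.single i 1 + e' :=
    ⟨e - Finsupp.single i 1, (add_tsub_cancel_of_le (Finsupp.single_le_iff.mpr
      (Nat.one_le_iff_ne_zero.mpr he))).symm⟩
  rw [coeff_single_add_X_mul, add_comm]
  simp only [Finsupp.add_apply, Finsupp.single_eq_same, Nat.cast_add, Nat.cast_one]
  rfl

/-- The coefficients of `x^(m+1)`, `y^(n+1)` and `x^(m+1) y^(n+1)` in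
`x(1-y+cx) ∂f/∂x + y(-1+x) ∂f/∂y`, where `a m n` is the coefficient of `x^m y^n` in `f`. -/
structure FirstIntegralRecurrence (c : ℂ) (a : ℕ → ℕ → ℂ) : Prop where
  axis_y : ∀ n : ℕ, ((n : ℂ) + 1) * a 0 (n + 1) = 0
  axis_x : ∀ m : ℕ, ((m : ℂ) + 1) * a (m + 1) 0 + c * m * a m 0 = 0
  interior : ∀ m n : ℕ, ((m : ℂ) - n) * a (m + 1) (n + 1) - (m + 1) * a (m + 1) n
    + (c * m + n + 1) * a m (n + 1) = 0

namespace FirstIntegralRecurrence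

variable {c : ℂ} {a : ℕ → ℕ → ℂ}

theorem eq_zero_of_ne_of_lower (h : FirstIntegralRecurrence c a) {m n : ℕ} (hmn : m ≠ n)
    (hlow : ∀ p q, p + q < m + n → p + q ≠ 0 → a p q = 0) : a m n = 0 := by
  rcases m with _ | m <;> rcases n with _ | n
  · exact absurd rfl hmn
  · simpa [Nat.cast_add_one_ne_zero] using h.axis_y n
  · have hm : (m : ℂ) * a m 0 = 0 := by
      rcases Nat.eq_zero_or_pos m with rfl | hm
      · simp
      · rw [hlow m 0 (by omega) (by omega), mul_zero]
    have := h.axis_x m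
    simpa [Nat.cast_add_one_ne_zero] using (by linear_combination this - c * hm :
      ((m : ℂ) + 1) * a (m + 1) 0 = 0)
  · have hne : (m : ℂ) - n ≠ 0 := sub_ne_zero.mpr (by exact_mod_cast (by omega : m ≠ n))
    have := h.interior m n
    rw [hlow (m + 1) n (by omega) (by omega), hlow m (n + 1) (by omega) (by omega)] at this
    simpa [hne] using this

theorem diag_eq_zero (h : FirstIntegralRecurrence c a) (hc : c ≠ 0) {k : ℕ}
    (hl : a (k + 2) k = 0) (hr : a k (k + 2) = 0) : a (k + 1) (k + 1) = 0 := by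
  have e₁ := h.interior (k + 1) k
  have e₂ := h.interior k (k + 1)
  have e₃ := h.interior (k + 1) (k + 1)
  rw [hl] at e₁
  rw [hr] at e₂
  push_cast at e₁ e₂ e₃
  have : c * ((k : ℂ) + 1) * a (k + 1) (k + 1) = 0 := by
    linear_combination ((k : ℂ) + 2) * e₁ + (c * k + c + k + 2) * e₂ + e₃
  simpa [hc, Nat.cast_add_one_ne_zero] using this

theorem eq_zero (h : FirstIntegralRecurrence c a) (hc : c ≠ 0) :
    ∀ m n, m + n ≠ 0 → a m n = 0 := by
  suffices ∀ d m n, m + n = d → d ≠ 0 → a m n = 0 from fun m n hmn => this _ m n rfl hmn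
  intro d
  induction d using Nat.strong_induction_on with
  | _ d ih =>
    have hlow : ∀ p q, p + q < d → p + q ≠ 0 → a p q = 0 := fun p q hpq => ih _ hpq p q rfl
    intro m n hd hd0
    subst hd
    by_cases hmn : m = n
    · subst hmn
      obtain ⟨k, rfl⟩ : ∃ k, m = k + 1 := Nat.exists_eq_succ_of_ne_zero (by omega)
      exact h.diag_eq_zero hc
        (h.eq_zero_of_ne_of_lower (by omega) fun p q hpq => hlow p q (by omega))
        (h.eq_zero_of_ne_of_lower (by omega) fun p q hpq => hlow p q (by omega))
    · exact h.eq_zero_of_ne_of_lower hmn hlow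

end FirstIntegralRecurrence

section FirstIntegral

open Finsupp (single)

noncomputable def biExp (m n : ℕ) : Fin 2 →₀ ℕ := single 0 m + single 1 n

@[simp] theorem biExp_apply_zero (m n : ℕ) : biExp m n 0 = m := by simp [biExp]

@[simp] theorem biExp_apply_one (m n : ℕ) : biExp m n 1 = n := by simp [biExp]

theorem eq_biExp (e : Fin 2 →₀ ℕ) : e = biExp (e 0) (e 1) := by
  ext i; fin_cases i <;> simp

theorem biExp_succ_left (m n : ℕ) : biExp (m + 1) n = single 0 1 + biExp m n := by
  rw [biExp, biExp, Finsupp.single_add]; abel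

theorem biExp_succ_right (m n : ℕ) : biExp m (n + 1) = single 1 1 + biExp m n := by
  rw [biExp, biExp, Finsupp.single_add]; abel

variable {c : ℂ} {f : MvPowerSeries (Fin 2) ℂ}

theorem coeff_firstIntegral_eq_zero
    (heq : X 0 * (1 - X 1 + C c * X 0) * formalPderiv 0 f
      + X 1 * (-1 + X 0) * formalPderiv 1 f = 0) (e : Fin 2 →₀ ℕ) :
    ((e 0 : ℂ) - e 1) * coeff e f
      + coeff e (X 0 * (C c * (X 0 * formalPderiv 0 f) + X 1 * formalPderiv 1 f))
      - coeff e (X 1 * (X 0 * formalPderiv 0 f)) = 0 := by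
  have hsplit : X 0 * formalPderiv 0 f - X 1 * formalPderiv 1 f
      + X 0 * (C c * (X 0 * formalPderiv 0 f) + X 1 * formalPderiv 1 f)
      - X 1 * (X 0 * formalPderiv 0 f) = 0 := by
    rw [← heq]; ring
  simpa [coeff_X_mul_formalPderiv, sub_mul] using congrArg (coeff e) hsplit

theorem firstIntegralRecurrence_of_eq
    (heq : X 0 * (1 - X 1 + C c * X 0) * formalPderiv 0 f
      + X 1 * (-1 + X 0) * formalPderiv 1 f = 0) :
    FirstIntegralRecurrence c (fun m n => coeff (biExp m n) f) := by
  have hcoeff := coeff_firstIntegral_eq_zero heq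
  constructor
  · intro n
    have := hcoeff (biExp 0 (n + 1))
    rw [coeff_X_mul_of_apply_eq_zero (s := 0) (by simp), biExp_succ_right, coeff_single_add_X_mul,
      coeff_X_mul_of_apply_eq_zero (s := 0) (by simp), ← biExp_succ_right] at this
    simp only [biExp_apply_zero, biExp_apply_one] at this
    push_cast at this
    linear_combination -this
  · intro m
    have := hcoeff (biExp (m + 1) 0)
    rw [coeff_X_mul_of_apply_eq_zero (s := 1) (by simp), biExp_succ_left, coeff_single_add_X_mul,
      ← biExp_succ_left] at this
    simp only [map_add, coeff_C_mul, coeff_X_mul_formalPderiv, biExp_apply_zero,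
      biExp_apply_one] at this
    push_cast at this
    linear_combination this
  · intro m n
    have := hcoeff (biExp (m + 1) (n + 1))
    rw [biExp_succ_left m, coeff_single_add_X_mul, ← biExp_succ_left, biExp_succ_right,
      coeff_single_add_X_mul, ← biExp_succ_right] at this
    simp only [map_add, coeff_C_mul, coeff_X_mul_formalPderiv, biExp_apply_zero,
      biExp_apply_one] at this
    push_cast at this
    linear_combination this

end FirstIntegral

/-- The planar system ẋ = x(1-y+cx), ẏ = y(-1+x) with c > 0 admits no (non-constant)
formal power series first integral. -/
theorem stmt_13 (c : ℝ) (hc : 0 < c) (f : MvPowerSeries (Fin 2) ℂ)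
    (heq : X 0 * (1 - X 1 + C (σ := Fin 2) (R := ℂ) (c : ℂ) * X 0) * formalPderiv 0 f
      + X 1 * (-1 + X 0) * formalPderiv 1 f = 0) :
    ∃ d : ℂ, f = C (σ := Fin 2) (R := ℂ) d := by
  have hvanish := (firstIntegralRecurrence_of_eq heq).eq_zero (Complex.ofReal_ne_zero.mpr hc.ne')
  refine ⟨coeff 0 f, ext fun e => ?_⟩
  rw [coeff_C]
  split_ifs with he
  · rw [he]
  · rw [eq_biExp e]
    refine hvanish _ _ fun hdeg => he ?_
    rw [eq_biExp e, Nat.eq_zero_of_add_eq_zero_left hdeg, Nat.eq_zero_of_add_eq_zero_right hdeg]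
    simp [biExp]
end

section
/- For the planar system ẋ = x(1-y+cx), ẏ = y(-1+x) with c > 0: if f = Σ_{k≥0} f_k(x) y^k is a formal power series with x(1-y+cx)∂f/∂x + y(-1+x)∂f/∂y = 0, then the coefficient f₁(x) satisfies x(1+cx)f₁'(x) = (1-x)f₁(x), and the only formal power series solution of this ODE that extends to a formal first integral is f₁ = 0. -/
/-!
Write `a n k` for the coefficient of `x^n y^k` in `f`. Comparing coefficients in the first-integral
equation gives `(n - k) a n k - n a n (k-1) + (c (n-1) + k) a (n-1) k = 0`. For `n = 0` this kills
`a 0 k` for `k ≥ 1`, and for `k = 0` it kills `a n 0` for `n ≥ 1` by induction. The row `k = 1` is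
then the ODE `x (1 + c x) f₁' = (1 - x) f₁`, a first-order recursion leaving `a 1 1` free (the
solutions are `d x (1 + c x)^(-1 - 1/c)`). The row `k = 2` at `n = 1, 2` forces `c · a 1 1 = 0`.
-/

open MvPowerSeries

open Finsupp

noncomputable def coeffXY (n k : ℕ) : MvPowerSeries (Fin 2) ℂ →ₗ[ℂ] ℂ :=
  coeff (single 0 n + single 1 k)

def IsFormalFirstIntegral (c : ℂ) (f : MvPowerSeries (Fin 2) ℂ) : Prop :=
  X 0 * (1 - X 1 + C c * X 0) * formalPderiv 0 f + X 1 * (-1 + X 0) * formalPderiv 1 f = 0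

section coeffXY

variable (g : MvPowerSeries (Fin 2) ℂ) (n k : ℕ)

@[simp]
lemma coeffXY_X_zero_mul_succ : coeffXY (n + 1) k (X 0 * g) = coeffXY n k g := by
  rw [coeffXY, coeffXY, show single (0 : Fin 2) (n + 1) + single 1 k
    = single 0 1 + (single 0 n + single 1 k) by rw [single_add]; abel,
    X_def, coeff_add_monomial_mul, one_mul]

@[simp]
lemma coeffXY_X_one_mul_succ : coeffXY n (k + 1) (X 1 * g) = coeffXY n k g := by
  rw [coeffXY, coeffXY, show single (0 : Fin 2) n + single 1 (k + 1)
    = single 1 1 + (single 0 n + single 1 k) by rw [single_add]; abel,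
    X_def, coeff_add_monomial_mul, one_mul]

@[simp]
lemma coeffXY_X_zero_mul_zero : coeffXY 0 k (X 0 * g) = 0 := by
  rw [coeffXY, X_def, coeff_monomial_mul, if_neg]
  simp [single_le_iff]

@[simp]
lemma coeffXY_X_one_mul_zero : coeffXY n 0 (X 1 * g) = 0 := by
  rw [coeffXY, X_def, coeff_monomial_mul, if_neg]
  simp [single_le_iff]

@[simp]
lemma coeffXY_C_mul (a : ℂ) : coeffXY n k (C a * g) = a * coeffXY n k g :=
  coeff_C_mul _ _ _

@[simp]
lemma coeffXY_formalPderiv_zero :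
    coeffXY n k (formalPderiv 0 g) = (n + 1) * coeffXY (n + 1) k g := by
  rw [coeffXY, coeffXY, coeff_apply, coeff_apply, formalPderiv,
    show single (0 : Fin 2) n + single 1 k + single 0 1 = single 0 (n + 1) + single 1 k by
      rw [single_add]; abel]
  simp

@[simp]
lemma coeffXY_formalPderiv_one :
    coeffXY n k (formalPderiv 1 g) = (k + 1) * coeffXY n (k + 1) g := by
  rw [coeffXY, coeffXY, coeff_apply, coeff_apply, formalPderiv,
    show single (0 : Fin 2) n + single 1 k + single 1 1 = single 0 n + single 1 (k + 1) by
      rw [single_add]; abel]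
  simp

@[simp]
lemma coeffXY_X_zero_mul_formalPderiv_zero :
    coeffXY n k (X 0 * formalPderiv 0 g) = n * coeffXY n k g := by
  cases n <;> simp

end coeffXY

namespace IsFormalFirstIntegral

variable {c : ℂ} {f : MvPowerSeries (Fin 2) ℂ} (hf : IsFormalFirstIntegral c f)
include hf

lemma coeffXY_relation (n k : ℕ) :
    coeffXY n k (X 0 * formalPderiv 0 f) - coeffXY n k (X 1 * (X 0 * formalPderiv 0 f))
      + c * coeffXY n k (X 0 * (X 0 * formalPderiv 0 f)) - coeffXY n k (X 1 * formalPderiv 1 f)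
      + coeffXY n k (X 0 * (X 1 * formalPderiv 1 f)) = 0 := by
  have h : X 0 * formalPderiv 0 f - X 1 * (X 0 * formalPderiv 0 f)
      + C c * (X 0 * (X 0 * formalPderiv 0 f)) - X 1 * formalPderiv 1 f
      + X 0 * (X 1 * formalPderiv 1 f) = 0 := by
    rw [← hf]; ring
  simpa using congrArg (coeffXY n k) h

lemma coeffXY_zero_succ (k : ℕ) : coeffXY 0 (k + 1) f = 0 := by
  simpa [Nat.cast_add_one_ne_zero] using hf.coeffXY_relation 0 (k + 1)

lemma coeffXY_succ_zero (n : ℕ) : coeffXY (n + 1) 0 f = 0 := by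
  induction n with
  | zero => simpa using hf.coeffXY_relation 1 0
  | succ n ih =>
    have h := hf.coeffXY_relation (n + 2) 0
    simp only [coeffXY_X_zero_mul_succ, coeffXY_formalPderiv_zero, coeffXY_X_one_mul_zero, ih,
      Nat.cast_add, Nat.cast_one, sub_zero, mul_zero, add_zero, mul_eq_zero] at h
    exact h.resolve_left (by norm_cast)

lemma coeffXY_succ_succ (n k : ℕ) :
    ((n : ℂ) - k) * coeffXY (n + 1) (k + 1) f - (n + 1) * coeffXY (n + 1) k f
      + (c * n + k + 1) * coeffXY n (k + 1) f = 0 := by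
  have h := hf.coeffXY_relation (n + 1) (k + 1)
  simp only [coeffXY_X_zero_mul_succ, coeffXY_X_one_mul_succ, coeffXY_formalPderiv_zero,
    coeffXY_formalPderiv_one, coeffXY_X_zero_mul_formalPderiv_zero] at h
  linear_combination h

lemma coeffXY_succ_one (n : ℕ) :
    n * coeffXY (n + 1) 1 f + (c * n + 1) * coeffXY n 1 f = 0 := by
  simpa [hf.coeffXY_succ_zero] using hf.coeffXY_succ_succ n 0

lemma coeffXY_one_one (hc : c ≠ 0) : coeffXY 1 1 f = 0 := by
  have h12 : coeffXY 1 2 f = -coeffXY 1 1 f := by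
    have h := hf.coeffXY_succ_succ 0 1
    rw [hf.coeffXY_zero_succ 1] at h
    push_cast at h
    linear_combination -h
  have h21 : coeffXY 2 1 f = -(c + 1) * coeffXY 1 1 f := by
    have h := hf.coeffXY_succ_one 1
    push_cast at h
    linear_combination h
  have h := hf.coeffXY_succ_succ 1 1
  rw [h12, h21] at h
  push_cast at h
  have hc11 : c * coeffXY 1 1 f = 0 := by linear_combination h
  exact (mul_eq_zero.mp hc11).resolve_left hc

lemma coeffXY_one (hc : c ≠ 0) (n : ℕ) : coeffXY n 1 f = 0 := by
  induction n with
  | zero => exact hf.coeffXY_zero_succ 0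
  | succ n ih =>
    rcases n with _ | n
    · exact hf.coeffXY_one_one hc
    · have h := hf.coeffXY_succ_one (n + 1)
      rw [ih] at h
      simpa [Nat.cast_add_one_ne_zero] using h

end IsFormalFirstIntegral

/-- For the planar system ẋ = x(1-y+cx), ẏ = y(-1+x) with c > 0: if
f = Σ_k f_k(x) y^k is a formal power series first integral, then f₁(x) satisfies
x(1+cx)f₁'(x) = (1-x)f₁(x), and f₁ = 0. -/
theorem stmt_14 (c : ℝ) (hc : 0 < c) (f : MvPowerSeries (Fin 2) ℂ)
    (heq : X 0 * (1 - X 1 + (C (c : ℂ) : MvPowerSeries (Fin 2) ℂ) * X 0) * formalPderiv 0 f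
      + X 1 * (-1 + X 0) * formalPderiv 1 f = 0)
    (f₁ : PowerSeries ℂ)
    (hf₁ : f₁ = PowerSeries.mk fun n => f (Finsupp.single 0 n + Finsupp.single 1 1)) :
    PowerSeries.X * (1 + (PowerSeries.C (c : ℂ) : PowerSeries ℂ) * PowerSeries.X)
        * PowerSeries.derivative ℂ f₁
      = (1 - PowerSeries.X) * f₁ ∧ f₁ = 0 := by
  have hf : IsFormalFirstIntegral c f := heq
  have h₁ : f₁ = 0 := by
    ext n
    rw [hf₁, PowerSeries.coeff_mk, map_zero]
    exact hf.coeffXY_one (Complex.ofReal_ne_zero.mpr hc.ne') n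
  exact ⟨by simp [h₁], h₁⟩
end

section
/- Let c > 0, α₁ ∈ ℂ and m₀ a nonnegative integer. If a nonzero polynomial h ∈ ℂ[x] satisfies x(1+cx)h'(x) = (-m₀ + α₁x)h(x), then α₁ = c(m₁ - m₀) for some nonnegative integer m₁; more precisely m₀ equals the order of vanishing of h at 0 and m₁ = m₀ + α₁/c equals the order of vanishing of h at -1/c. -/
/-!
If `(X - a) · A · h' = B · h` and `h = (X - a)^n q` with `q(a) ≠ 0`, then cancelling `(X - a)^n`
and evaluating at `a` gives `n · A(a) = B(a)`. With `n₀, n₁` the orders of `h` at `0` and `-1/c`: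
at `0` (where `A = 1 + c X`) this reads `n₀ = -m₀`, so both vanish; at `-1/c` (where `A = c X`
takes the value `-1`) it reads `-n₁ = -m₀ - α₁/c`.
-/

open Polynomial

section RootMultiplicity

variable {R : Type*} [CommRing R]

lemma X_sub_C_mul_derivative_pow_mul (a : R) (n : ℕ) (q : R[X]) :
    (X - C a) * derivative ((X - C a) ^ n * q)
      = (X - C a) ^ n * (C (n : R) * q + (X - C a) * derivative q) := by
  rcases n with _ | k
  · simp
  · rw [derivative_mul, derivative_X_sub_C_pow]
    simp only [Nat.add_sub_cancel, Nat.cast_succ, C_add, C_1]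
    ring

variable [IsDomain R]

lemma rootMultiplicity_mul_eval_eq_of_mul_derivative {h A B : R[X]} (hne : h ≠ 0) (a : R)
    (heq : (X - C a) * A * derivative h = B * h) :
    (h.rootMultiplicity a : R) * A.eval a = B.eval a := by
  obtain ⟨q, hq, hqa⟩ := h.exists_eq_pow_rootMultiplicity_mul_and_not_dvd hne a
  set n := h.rootMultiplicity a
  have hq0 : q.eval a ≠ 0 := fun h0 => hqa (dvd_iff_isRoot.2 h0)
  have hcancel : A * (C (n : R) * q + (X - C a) * derivative q) = B * q := by
    refine mul_left_cancel₀ (pow_ne_zero n (X_sub_C_ne_zero a)) ?_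
    calc (X - C a) ^ n * (A * (C (n : R) * q + (X - C a) * derivative q))
        = A * ((X - C a) * derivative ((X - C a) ^ n * q)) := by
          rw [X_sub_C_mul_derivative_pow_mul]; ring
      _ = B * h := by rw [← heq, hq]; ring
      _ = (X - C a) ^ n * (B * q) := by rw [hq]; ring
  have heval := congrArg (eval a) hcancel
  simp only [eval_mul, eval_add, eval_sub, eval_C, eval_X, sub_self, zero_mul, add_zero]
    at heval
  exact mul_right_cancel₀ hq0 (by linear_combination heval)

end RootMultiplicity

/-- If c > 0 and a nonzero polynomial h ∈ ℂ[x] satisfies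
x(1+cx)h'(x) = (-m₀+α₁x)h(x), then α₁ = c(m₁-m₀) with m₀ the order of vanishing of h
at 0 and m₁ the order of vanishing of h at -1/c. -/
theorem stmt_15 (c : ℝ) (hc : 0 < c) (α₁ : ℂ) (m₀ : ℕ) (h : Polynomial ℂ) (hne : h ≠ 0)
    (heq : X * (1 + C (c : ℂ) * X) * derivative h
      = (C (-(m₀ : ℂ)) + C α₁ * X) * h) :
    ∃ m₁ : ℕ, α₁ = (c : ℂ) * ((m₁ : ℂ) - (m₀ : ℂ)) ∧
      m₀ = h.rootMultiplicity 0 ∧ m₁ = h.rootMultiplicity (-(1 / (c : ℂ))) := by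
  have hc0 : (c : ℂ) ≠ 0 := by exact_mod_cast hc.ne'
  have at_zero := rootMultiplicity_mul_eval_eq_of_mul_derivative hne 0
    (by rwa [C_0, sub_zero])
  have hfactor : X * (1 + C (c : ℂ) * X) = (X - C (-(1 / (c : ℂ)))) * (C (c : ℂ) * X) := by
    have hinv : C (c : ℂ) * C (1 / (c : ℂ)) = 1 := by rw [← C_mul, mul_one_div_cancel hc0, C_1]
    rw [map_neg, sub_neg_eq_add]
    linear_combination (-X) * hinv
  have at_neg_inv := rootMultiplicity_mul_eval_eq_of_mul_derivative hne (-(1 / (c : ℂ)))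
    (A := C (c : ℂ) * X) (by rwa [← hfactor])
  simp only [eval_add, eval_mul, eval_one, eval_C, eval_X, mul_zero, add_zero, mul_one]
    at at_zero at_neg_inv
  have hsum : ((h.rootMultiplicity 0 + m₀ : ℕ) : ℂ) = 0 := by
    push_cast; linear_combination at_zero
  have hm₀ : h.rootMultiplicity 0 + m₀ = 0 := by exact_mod_cast hsum
  refine ⟨_, ?_, by omega, rfl⟩
  field_simp at at_neg_inv
  linear_combination at_neg_inv
end

section
/- Suppose a > 0 and a homogeneous polynomial f_n(x,z) of degree n over ℂ satisfies -a x² z ∂f_n/∂x + a x² z ∂f_n/∂z = β₄ x z f_n with f_n ≠ 0. Then β₄ = -a·m₂ for some nonnegative integer m₂ ≤ n, and f_n is of the form (x+z)^{n-m₂} times x^{m₂} times a polynomial in (x+z) and x; in particular x^{m₂} divides f_n and β₄/a is a nonpositive integer. -/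
open MvPolynomial

noncomputable def W : Fin 2 → MvPolynomial (Fin 2) ℂ := ![X 0, X 1 - X 0]
noncomputable def V : Fin 2 → MvPolynomial (Fin 2) ℂ := ![X 0, X 0 + X 1]

lemma W0 : W 0 = X 0 := rfl
lemma W1 : W 1 = X 1 - X 0 := rfl
lemma V0 : V 0 = X 0 := rfl
lemma V1 : V 1 = X 0 + X 1 := rfl

lemma chain (f : MvPolynomial (Fin 2) ℂ) :
    aeval W (pderiv 0 f) = pderiv 0 (aeval W f) + pderiv 1 (aeval W f) ∧
    aeval W (pderiv 1 f) = pderiv 1 (aeval W f) := by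
  have h01 : (0 : Fin 2) ≠ 1 := by decide
  have h10 : (1 : Fin 2) ≠ 0 := by decide
  induction f using MvPolynomial.induction_on with
  | C c => refine ⟨?_, ?_⟩ <;> simp [aeval_C, pderiv_C]
  | add p q hp hq =>
    refine ⟨?_, ?_⟩ <;> simp only [map_add, hp.1, hp.2, hq.1, hq.2] <;> ring
  | mul_X p i hp =>
    fin_cases i <;> simp only [Fin.zero_eta, Fin.mk_one] <;> refine ⟨?_, ?_⟩ <;>
      simp only [pderiv_mul, pderiv_X_self, pderiv_X_of_ne h10, pderiv_X_of_ne h01, map_add,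
        map_mul, map_sub, map_zero, aeval_X, W0, W1, mul_one, mul_zero, add_zero]
    · linear_combination (X 0 : MvPolynomial (Fin 2) ℂ) * hp.1
    · linear_combination (X 0 : MvPolynomial (Fin 2) ℂ) * hp.2
    · linear_combination (X 1 - X 0 : MvPolynomial (Fin 2) ℂ) * hp.1
    · linear_combination (X 1 - X 0 : MvPolynomial (Fin 2) ℂ) * hp.2

lemma hcomp (p : MvPolynomial (Fin 2) ℂ) : aeval V (aeval W p) = p := by
  have h : (aeval V).comp (aeval W) = AlgHom.id ℂ (MvPolynomial (Fin 2) ℂ) := by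
    apply algHom_ext
    intro i
    fin_cases i <;>
      simp [W0, W1, V0, V1, Fin.zero_eta, Fin.mk_one, map_sub, aeval_X]
  calc aeval V (aeval W p) = ((aeval V).comp (aeval W)) p := rfl
    _ = p := by rw [h]; rfl

lemma Xmul (s : Fin 2 →₀ ℕ) (a : ℂ) :
    (X 0 : MvPolynomial (Fin 2) ℂ) * pderiv 0 (monomial s a) = monomial s (a * s 0) := by
  rw [pderiv_monomial]
  rcases Nat.eq_zero_or_pos (s 0) with h | h
  · simp [h]
  · have hs : s - Finsupp.single 0 1 + Finsupp.single 0 1 = s :=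
      tsub_add_cancel_of_le (Finsupp.single_le_iff.mpr h)
    rw [X, monomial_mul, one_mul, add_comm, hs]

lemma coeffE (g : MvPolynomial (Fin 2) ℂ) (d : Fin 2 →₀ ℕ) :
    coeff d ((X 0 : MvPolynomial (Fin 2) ℂ) * pderiv 0 g) = (d 0 : ℂ) * coeff d g := by
  induction g using MvPolynomial.induction_on' with
  | monomial s a =>
    rw [Xmul, coeff_monomial, coeff_monomial]
    split_ifs with h
    · subst h; ring
    · ring
  | add p q hp hq =>
    rw [map_add, mul_add, coeff_add, coeff_add, hp, hq]; ring

/-- Top-degree constraint: if a > 0 and a nonzero homogeneous polynomial f(x,z) of degree n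
satisfies -ax²z∂f/∂x + ax²z∂f/∂z = β₄xz·f, then β₄ = -a·m₂ with 0 ≤ m₂ ≤ n, x^m₂ ∣ f,
and f = (x+z)^(n-m₂)·x^m₂·(const). -/
theorem stmt_16 (a : ℝ) (ha : 0 < a) (β₄ : ℂ) (n : ℕ) (f : MvPolynomial (Fin 2) ℂ)
    (hf : f.IsHomogeneous n) (hne : f ≠ 0)
    (heq : -(C (a : ℂ)) * X 0 ^ 2 * X 1 * pderiv 0 f
      + C (a : ℂ) * X 0 ^ 2 * X 1 * pderiv 1 f = C β₄ * X 0 * X 1 * f) :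
    ∃ m₂ : ℕ, m₂ ≤ n ∧ β₄ = -(a : ℂ) * (m₂ : ℂ) ∧
      (X 0 : MvPolynomial (Fin 2) ℂ) ^ m₂ ∣ f ∧
      ∃ g : MvPolynomial (Fin 2) ℂ, f = (X 0 + X 1) ^ (n - m₂) * X 0 ^ m₂ * g := by
  have haC : (a : ℂ) ≠ 0 := by exact_mod_cast ha.ne'
  set g : MvPolynomial (Fin 2) ℂ := aeval W f with hg
  -- cancel X 0 * X 1
  have heq' : C (a : ℂ) * X 0 * (pderiv 1 f - pderiv 0 f) = C β₄ * f := by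
    have hX01 : (X 0 * X 1 : MvPolynomial (Fin 2) ℂ) ≠ 0 :=
      mul_ne_zero (X_ne_zero _) (X_ne_zero _)
    apply mul_left_cancel₀ hX01
    linear_combination heq
  -- transform with the substitution
  have geq : C β₄ * g + C (a : ℂ) * (X 0 * pderiv 0 g) = 0 := by
    have h2 := congrArg (aeval W) heq'
    rw [map_mul, map_mul, map_sub, map_mul, aeval_C, aeval_C, aeval_X, W0,
      (chain f).1, (chain f).2] at h2
    rw [algebraMap_eq] at h2
    linear_combination -h2
  -- coefficient relation
  have key : ∀ d : Fin 2 →₀ ℕ, coeff d g ≠ 0 → β₄ = -(a : ℂ) * (d 0 : ℂ) := by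
    intro d hd
    have hc := congrArg (coeff d) geq
    rw [coeff_add, coeff_C_mul, coeff_C_mul, coeffE, coeff_zero] at hc
    have h3 : (β₄ + (a : ℂ) * (d 0 : ℂ)) * coeff d g = 0 := by linear_combination hc
    rcases mul_eq_zero.mp h3 with h4 | h4
    · linear_combination h4
    · exact absurd h4 hd
  have hgne : g ≠ 0 := by
    intro h0
    apply hne
    rw [← hcomp f, ← hg, h0, map_zero]
  have hghom : g.IsHomogeneous n := by
    have hW : ∀ i, (W i).IsHomogeneous 1 := by
      intro i
      fin_cases i
      · exact isHomogeneous_X _ _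
      · exact (isHomogeneous_X _ _).sub (isHomogeneous_X _ _)
    rw [hg]; simpa using hf.aeval W hW
  have hdeg : ∀ d : Fin 2 →₀ ℕ, coeff d g ≠ 0 → d 0 + d 1 = n := by
    intro d hd
    have h := hghom hd
    rw [Finsupp.weight_apply, Finsupp.sum_fintype] at h
    · simpa [Fin.sum_univ_two] using h
    · intro i; simp
  obtain ⟨d₀, hd₀⟩ := support_nonempty.mpr hgne
  have hd₀c : coeff d₀ g ≠ 0 := mem_support_iff.mp hd₀
  have huniq : ∀ d : Fin 2 →₀ ℕ, coeff d g ≠ 0 → d = d₀ := by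
    intro d hd
    have h1 : -(a : ℂ) * (d 0 : ℂ) = -(a : ℂ) * (d₀ 0 : ℂ) := by
      rw [← key d hd, key d₀ hd₀c]
    have h2 : (d 0 : ℂ) = (d₀ 0 : ℂ) := mul_left_cancel₀ (neg_ne_zero.mpr haC) h1
    have h3 : d 0 = d₀ 0 := Nat.cast_injective h2
    have h4 := hdeg d hd
    have h5 := hdeg d₀ hd₀c
    ext j
    fin_cases j
    · exact h3
    · simp only [Fin.mk_one]; omega
  obtain ⟨c, hc⟩ : ∃ c, coeff d₀ g = c := ⟨_, rfl⟩
  have hcne : c ≠ 0 := hc ▸ hd₀c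
  have hmono : g = monomial d₀ c := by
    rw [← hc]
    ext d
    rw [coeff_monomial]
    split_ifs with h
    · rw [h]
    · by_contra hc
      exact h ((huniq d hc).symm)
  have hd₀split : d₀ = Finsupp.single 0 (d₀ 0) + Finsupp.single 1 (d₀ 1) := by
    ext j
    fin_cases j <;> simp [Finsupp.single_apply]
  have hmonoeq : (monomial d₀ (c) : MvPolynomial (Fin 2) ℂ)
      = C (c) * X 0 ^ (d₀ 0) * X 1 ^ (d₀ 1) := by
    rw [hd₀split, X_pow_eq_monomial, X_pow_eq_monomial, C_apply, monomial_mul, monomial_mul]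
    simp
  have hfeq : f = C (c) * X 0 ^ (d₀ 0) * (X 0 + X 1) ^ (d₀ 1) := by
    have : f = aeval V g := (hcomp f).symm
    rw [this, hmono, hmonoeq, map_mul, map_mul, map_pow, map_pow, aeval_X, aeval_X, V0, V1,
      aeval_C, algebraMap_eq]
  have hsum := hdeg d₀ hd₀c
  have hnm : n - d₀ 0 = d₀ 1 := by omega
  refine ⟨d₀ 0, by omega, key d₀ hd₀c, ⟨(X 0 + X 1) ^ (d₀ 1) * C (c), by
    rw [hfeq]; ring⟩, ⟨C (c), by rw [hfeq, hnm]; ring⟩⟩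
end

section
/- Suppose a > 0 and a nonzero homogeneous polynomial f_n(x,y,z) of degree n over ℂ satisfies -a x² z ∂f_n/∂x + a x² z ∂f_n/∂z = (α₄x² + α₅xy + α₆xz + α₇y² + α₈yz + α₉z²) f_n. Then α₅ = α₇ = α₈ = α₉ = 0, α₄ = N₄·a and α₆ = -N₆·a for some nonnegative integers N₄, N₆. -/
/-! Multiplying `f` by `x` shifts the cofactor by `-a x z`, and multiplying it by `z` shifts it by
`a x²`, because `x² z (∂_z - ∂_x)` is a derivation with `x ↦ -x² z`, `z ↦ x² z`. Stripping all
factors `x` and `z` from `f` thus reduces to the case where neither divides `f`. There `x` and `z`,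
which divide the left-hand side, must divide the cofactor, so it is `α₆ x z`; cancelling `x z`
leaves `a x (∂_z f - ∂_x f) = α₆ f`, and `x ∤ f` forces `α₆ = 0`. -/

open MvPolynomial

namespace TopDegreeDarboux

variable {R : Type*} [CommRing R]

/-- `a x² z (∂_z - ∂_x)`, with `x, y, z = X 0, X 1, X 2`. -/
noncomputable def topField (a : R) (f : MvPolynomial (Fin 3) R) : MvPolynomial (Fin 3) R :=
  -(C a) * X 0 ^ 2 * X 2 * pderiv 0 f + C a * X 0 ^ 2 * X 2 * pderiv 2 f

noncomputable def quadCofactor (α₄ α₅ α₆ α₇ α₈ α₉ : R) : MvPolynomial (Fin 3) R :=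
  C α₄ * X 0 ^ 2 + C α₅ * X 0 * X 1 + C α₆ * X 0 * X 2
    + C α₇ * X 1 ^ 2 + C α₈ * X 1 * X 2 + C α₉ * X 2 ^ 2

variable {a α₄ α₅ α₆ α₇ α₈ α₉ : R} {f g : MvPolynomial (Fin 3) R}

theorem topField_X0_mul :
    topField a (X 0 * g) = X 0 * (topField a g - C a * X 0 * X 2 * g) := by
  simp only [topField, pderiv_mul, pderiv_X_self, pderiv_X_of_ne (by decide : (0 : Fin 3) ≠ 2)]
  ring

theorem topField_X2_mul :
    topField a (X 2 * g) = X 2 * (topField a g + C a * X 0 ^ 2 * g) := by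
  simp only [topField, pderiv_mul, pderiv_X_self, pderiv_X_of_ne (by decide : (2 : Fin 3) ≠ 0)]
  ring

theorem coeffs_eq_zero_of_X0_dvd (h : X 0 ∣ quadCofactor α₄ α₅ α₆ α₇ α₈ α₉) :
    α₇ = 0 ∧ α₈ = 0 ∧ α₉ = 0 := by
  obtain ⟨r, hr⟩ := h
  have at_pt (v : Fin 3 → R) := congrArg (eval v) hr
  have h7 : α₇ = 0 := by simpa [quadCofactor] using at_pt ![0, 1, 0]
  have h9 : α₉ = 0 := by simpa [quadCofactor] using at_pt ![0, 0, 1]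
  have h8 : α₈ = 0 := by simpa [quadCofactor, h7, h9] using at_pt ![0, 1, 1]
  exact ⟨h7, h8, h9⟩

theorem coeffs_eq_zero_of_X2_dvd (h : X 2 ∣ quadCofactor α₄ α₅ α₆ α₇ α₈ α₉) :
    α₄ = 0 ∧ α₅ = 0 ∧ α₇ = 0 := by
  obtain ⟨r, hr⟩ := h
  have at_pt (v : Fin 3 → R) := congrArg (eval v) hr
  have h4 : α₄ = 0 := by simpa [quadCofactor] using at_pt ![1, 0, 0]
  have h7 : α₇ = 0 := by simpa [quadCofactor] using at_pt ![0, 1, 0]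
  have h5 : α₅ = 0 := by simpa [quadCofactor, h4, h7] using at_pt ![1, 1, 0]
  exact ⟨h4, h5, h7⟩

variable [IsDomain R]

theorem topField_eq_of_X0_mul
    (h : topField a (X 0 * g) = quadCofactor α₄ α₅ α₆ α₇ α₈ α₉ * (X 0 * g)) :
    topField a g = quadCofactor α₄ α₅ (α₆ + a) α₇ α₈ α₉ * g := by
  apply mul_left_cancel₀ (X_ne_zero (R := R) 0)
  rw [topField_X0_mul] at h
  simp only [quadCofactor, C_add] at h ⊢
  linear_combination h

theorem topField_eq_of_X2_mul
    (h : topField a (X 2 * g) = quadCofactor α₄ α₅ α₆ α₇ α₈ α₉ * (X 2 * g)) :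
    topField a g = quadCofactor (α₄ - a) α₅ α₆ α₇ α₈ α₉ * g := by
  apply mul_left_cancel₀ (X_ne_zero (R := R) 2)
  rw [topField_X2_mul] at h
  simp only [quadCofactor, C_sub] at h ⊢
  linear_combination h

theorem totalDegree_lt_X_mul (i : Fin 3) (hg : g ≠ 0) : g.totalDegree < (X i * g).totalDegree := by
  rw [totalDegree_mul_of_isDomain (X_ne_zero i) hg, totalDegree_X]
  omega

theorem coeffs_eq_zero_of_not_X0_dvd_of_not_X2_dvd (h0 : ¬ X 0 ∣ f) (h2 : ¬ X 2 ∣ f)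
    (h : topField a f = quadCofactor α₄ α₅ α₆ α₇ α₈ α₉ * f) :
    α₄ = 0 ∧ α₅ = 0 ∧ α₆ = 0 ∧ α₇ = 0 ∧ α₈ = 0 ∧ α₉ = 0 := by
  have hX0 : X 0 ∣ quadCofactor α₄ α₅ α₆ α₇ α₈ α₉ :=
    (X_prime.dvd_or_dvd ⟨X 0 * X 2 * (C a * pderiv 2 f - C a * pderiv 0 f),
      by rw [← h, topField]; ring⟩).resolve_right h0
  have hX2 : X 2 ∣ quadCofactor α₄ α₅ α₆ α₇ α₈ α₉ :=
    (X_prime.dvd_or_dvd ⟨X 0 ^ 2 * (C a * pderiv 2 f - C a * pderiv 0 f),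
      by rw [← h, topField]; ring⟩).resolve_right h2
  obtain ⟨rfl, rfl, rfl⟩ := coeffs_eq_zero_of_X0_dvd hX0
  obtain ⟨rfl, rfl, -⟩ := coeffs_eq_zero_of_X2_dvd hX2
  have h' : X 0 * X 2 * (C a * X 0 * (pderiv 2 f - pderiv 0 f)) = X 0 * X 2 * (C α₆ * f) := by
    simp only [topField, quadCofactor, map_zero] at h
    linear_combination h
  have hdvd : X 0 ∣ C α₆ * f :=
    ⟨C a * (pderiv 2 f - pderiv 0 f), by
      rw [← mul_left_cancel₀ (mul_ne_zero (X_ne_zero 0) (X_ne_zero 2)) h']; ring⟩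
  obtain ⟨t, ht⟩ := (X_prime.dvd_or_dvd hdvd).resolve_right h0
  have h6 : α₆ = 0 := by simpa using congrArg (eval 0) ht
  exact ⟨rfl, rfl, h6, rfl, rfl, rfl⟩

theorem cofactor_coeffs_of_topField_eq (hne : f ≠ 0)
    (h : topField a f = quadCofactor α₄ α₅ α₆ α₇ α₈ α₉ * f) :
    α₅ = 0 ∧ α₇ = 0 ∧ α₈ = 0 ∧ α₉ = 0 ∧
      (∃ N₄ : ℕ, α₄ = N₄ * a) ∧ ∃ N₆ : ℕ, α₆ = -N₆ * a := by
  induction hd : f.totalDegree using Nat.strong_induction_on generalizing f α₄ α₆ with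
  | _ d ih =>
  subst hd
  by_cases h0 : X 0 ∣ f
  · obtain ⟨g, rfl⟩ := h0
    have hg := right_ne_zero_of_mul hne
    obtain ⟨h5, h7, h8, h9, hN₄, N₆, hN₆⟩ :=
      ih _ (totalDegree_lt_X_mul 0 hg) hg (topField_eq_of_X0_mul h) rfl
    exact ⟨h5, h7, h8, h9, hN₄, N₆ + 1, by push_cast; linear_combination hN₆⟩
  by_cases h2 : X 2 ∣ f
  · obtain ⟨g, rfl⟩ := h2
    have hg := right_ne_zero_of_mul hne
    obtain ⟨h5, h7, h8, h9, ⟨N₄, hN₄⟩, hN₆⟩ :=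
      ih _ (totalDegree_lt_X_mul 2 hg) hg (topField_eq_of_X2_mul h) rfl
    exact ⟨h5, h7, h8, h9, ⟨N₄ + 1, by push_cast; linear_combination hN₄⟩, hN₆⟩
  obtain ⟨h4, h5, h6, h7, h8, h9⟩ := coeffs_eq_zero_of_not_X0_dvd_of_not_X2_dvd h0 h2 h
  exact ⟨h5, h7, h8, h9, ⟨0, by simp [h4]⟩, 0, by simp [h6]⟩

end TopDegreeDarboux

open TopDegreeDarboux in
theorem stmt_17_general (a : ℝ) (α₄ α₅ α₆ α₇ α₈ α₉ : ℂ)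
    (f : MvPolynomial (Fin 3) ℂ) (hne : f ≠ 0)
    (heq : -(C (a : ℂ)) * X 0 ^ 2 * X 2 * pderiv 0 f
      + C (a : ℂ) * X 0 ^ 2 * X 2 * pderiv 2 f
      = (C α₄ * X 0 ^ 2 + C α₅ * X 0 * X 1 + C α₆ * X 0 * X 2
        + C α₇ * X 1 ^ 2 + C α₈ * X 1 * X 2 + C α₉ * X 2 ^ 2) * f) :
    α₅ = 0 ∧ α₇ = 0 ∧ α₈ = 0 ∧ α₉ = 0 ∧
      (∃ N₄ : ℕ, α₄ = (N₄ : ℂ) * (a : ℂ)) ∧ (∃ N₆ : ℕ, α₆ = -(N₆ : ℂ) * (a : ℂ)) :=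
  cofactor_coeffs_of_topField_eq hne heq

/-- Top-degree constraint in 3D: if a > 0 and a nonzero homogeneous polynomial f(x,y,z)
of degree n satisfies -ax²z∂f/∂x + ax²z∂f/∂z = (α₄x²+α₅xy+α₆xz+α₇y²+α₈yz+α₉z²)f,
then α₅ = α₇ = α₈ = α₉ = 0, α₄ = N₄a and α₆ = -N₆a for nonnegative integers N₄, N₆. -/
theorem stmt_17 (a : ℝ) (ha : 0 < a) (α₄ α₅ α₆ α₇ α₈ α₉ : ℂ) (n : ℕ)
    (f : MvPolynomial (Fin 3) ℂ) (hf : f.IsHomogeneous n) (hne : f ≠ 0)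
    (heq : -(C (a : ℂ)) * X 0 ^ 2 * X 2 * pderiv 0 f
      + C (a : ℂ) * X 0 ^ 2 * X 2 * pderiv 2 f
      = (C α₄ * X 0 ^ 2 + C α₅ * X 0 * X 1 + C α₆ * X 0 * X 2
        + C α₇ * X 1 ^ 2 + C α₈ * X 1 * X 2 + C α₉ * X 2 ^ 2) * f) :
    α₅ = 0 ∧ α₇ = 0 ∧ α₈ = 0 ∧ α₉ = 0 ∧
      (∃ N₄ : ℕ, α₄ = (N₄ : ℂ) * (a : ℂ)) ∧ (∃ N₆ : ℕ, α₆ = -(N₆ : ℂ) * (a : ℂ)) :=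
  stmt_17_general a α₄ α₅ α₆ α₇ α₈ α₉ f hne heq
end
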